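/- arXiv:1911.04375 — 2 statements merged into one kernel-verified Lean document; each statement's English description precedes it below -/
import Mathlib

section
/- Let ρ∈(0,1) be irrational with all partial quotients a_n even, and write (ρ_n,α_n)=T^n(ρ,1/2) for n≥0, so that ρ_n=G^n(ρ). Then ρ_n<1/2 for all n≥1, and for all n≥1 one has α_n=ρ_n/2 if n is odd and α_n=1/2+ρ_n if n is even. In particular, if moreover a_n→∞, then α_{2i}→1/2 as i→∞. (Via the identification of renormalization trails with T-orbits, this is the content of Proposition 5.1 of the paper.) -/
noncomputable section

open Set Filter MeasureTheory Topology

/-- The Gauss map `G(ρ) = {1/ρ}`, `G(0) = 0`. -/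
def gaussMap (ρ : ℝ) : ℝ := if ρ = 0 then 0 else Int.fract (1 / ρ)

/-- The fiber maps `T_ρ : [-1,1] → [-1,1]` of the skew product. -/
def fiberMap (ρ α : ℝ) : ℝ :=
  if ρ = 0 then 0
  else if α ≤ 0 then -α
  else if α ≤ ρ * gaussMap ρ then -α / (ρ * gaussMap ρ)
  else Int.fract ((1 - α) / ρ)

/-- The skew product `T(ρ,α) = (G(ρ), T_ρ(α))`. -/
def skewProd (p : ℝ × ℝ) : ℝ × ℝ := (gaussMap p.1, fiberMap p.1 p.2)

/-- The rectangle `R = [0,1] × [-1,1]`. -/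
def Rect : Set (ℝ × ℝ) := Icc (0 : ℝ) 1 ×ˢ Icc (-1 : ℝ) 1

/-- `M = ([0,1] ∖ ℚ) × [-1,1]`. -/
def Mset : Set (ℝ × ℝ) := {p | p ∈ Rect ∧ Irrational p.1}

/-- The `n`-th partial quotient of the continued fraction expansion of `θ`:
`a_n(θ) = ⌊1 / Gⁿ(θ)⌋`. -/
def pquot (θ : ℝ) (n : ℕ) : ℕ := ⌊1 / gaussMap^[n] θ⌋₊

/-- The set `𝔼_∞` of irrational numbers in `(0,1)` all of whose partial quotients are even
and tend to infinity. -/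
def Einf : Set ℝ :=
  {θ | θ ∈ Ioo (0 : ℝ) 1 ∧ Irrational θ ∧ (∀ n, Even (pquot θ n)) ∧
    Tendsto (fun n => pquot θ n) atTop atTop}

/-!
Put `ρ_n = Gⁿ(ρ)` and `a_n = 2 m_n`, so that `1/ρ_n = 2 m_n + ρ_{n+1}`. Even partial quotients
and irrationality force `ρ_n < 1/2` for every `n`; in particular `ρ_n ρ_{n+1} < ρ_n/2`, so along
the orbit every fiber map acts by its last branch `α ↦ {(1 - α)/ρ_n}`, and the identity above
gives `1/2 ↦ ρ_1/2 ↦ 1/2 + ρ_2 ↦ ρ_3/2 ↦ ⋯`. Since `ρ_n ≤ 1/a_n`, `a_n → ∞` forces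
`α_{2i} = 1/2 + ρ_{2i} → 1/2`.
-/

open Function

lemma gaussMap_nonneg (θ : ℝ) : 0 ≤ gaussMap θ := by
  unfold gaussMap
  split_ifs
  exacts [le_rfl, Int.fract_nonneg _]

lemma gaussMap_lt_one (θ : ℝ) : gaussMap θ < 1 := by
  unfold gaussMap
  split_ifs
  exacts [one_pos, Int.fract_lt_one _]

lemma Irrational.gaussMap_pos {θ : ℝ} (h : Irrational θ) : 0 < gaussMap θ := by
  rw [gaussMap, if_neg h.ne_zero, Int.fract_pos, one_div]
  exact h.inv.ne_int _

lemma Irrational.gaussMap {θ : ℝ} (h : Irrational θ) : Irrational (_root_.gaussMap θ) := by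
  rw [_root_.gaussMap, if_neg h.ne_zero, Int.fract, one_div]
  exact h.inv.sub_intCast _

lemma one_div_eq_floor_add_gaussMap {θ : ℝ} (hθ : 0 ≤ θ) :
    1 / θ = ⌊1 / θ⌋₊ + gaussMap θ := by
  rcases hθ.eq_or_lt with rfl | hθ
  · simp [gaussMap]
  · rw [gaussMap, if_neg hθ.ne', natCast_floor_eq_intCast_floor (by positivity),
      Int.floor_add_fract]

lemma Irrational.iterate_gaussMap {θ : ℝ} (h : Irrational θ) (n : ℕ) :
    Irrational (_root_.gaussMap^[n] θ) := by
  induction n with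
  | zero => exact h
  | succ n ih => rw [iterate_succ_apply']; exact ih.gaussMap

lemma iterate_gaussMap_pos {θ : ℝ} (hθ : 0 < θ) (h : Irrational θ) : ∀ n, 0 < gaussMap^[n] θ
  | 0 => hθ
  | n + 1 => by rw [iterate_succ_apply']; exact (h.iterate_gaussMap n).gaussMap_pos

lemma iterate_gaussMap_lt_one {θ : ℝ} (hθ : θ < 1) : ∀ n, gaussMap^[n] θ < 1
  | 0 => hθ
  | n + 1 => by rw [iterate_succ_apply']; exact gaussMap_lt_one _

lemma lt_half_of_even_floor_one_div {r : ℝ} (h0 : 0 < r) (h1 : r < 1) (hirr : Irrational r)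
    (heven : Even ⌊1 / r⌋₊) : r < 1 / 2 := by
  have hfloor : (2 : ℝ) ≤ ⌊1 / r⌋₊ := by
    have : 1 ≤ ⌊1 / r⌋₊ := Nat.one_le_floor_iff _ |>.mpr (by rw [le_div_iff₀ h0]; linarith)
    obtain ⟨m, hm⟩ := heven
    exact_mod_cast (show 2 ≤ ⌊1 / r⌋₊ by omega)
  have h2 : 2 < 1 / r := by
    linarith [one_div_eq_floor_add_gaussMap h0.le, hirr.gaussMap_pos]
  rw [lt_div_iff₀ h0] at h2
  linarith

lemma tendsto_zero_of_tendsto_floor_one_div {r : ℕ → ℝ}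
    (h : Tendsto (fun n => ⌊1 / r n⌋₊) atTop atTop) : Tendsto r atTop (𝓝 0) := by
  have hle : ∀ᶠ n in atTop, (⌊1 / r n⌋₊ : ℝ) ≤ 1 / r n := by
    filter_upwards [h.eventually_ge_atTop 1] with n hn
    exact Nat.floor_le (by linarith [Nat.floor_pos.mp hn])
  have hinv : Tendsto (fun n => 1 / r n) atTop atTop :=
    tendsto_atTop_mono' _ hle (tendsto_natCast_atTop_atTop.comp h)
  exact hinv.inv_tendsto_atTop.congr fun n => by simp

lemma fiberMap_of_mul_gaussMap_lt {r α : ℝ} (hr : 0 < r) (hα : r * gaussMap r < α) :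
    fiberMap r α = Int.fract ((1 - α) / r) := by
  have hα0 : 0 < α := (mul_nonneg hr.le (gaussMap_nonneg r)).trans_lt hα
  rw [fiberMap, if_neg hr.ne', if_neg hα0.not_ge, if_neg hα.not_ge]

lemma one_div_eq_two_mul_add_gaussMap {r : ℝ} (hr : 0 < r) (heven : Even ⌊1 / r⌋₊) :
    ∃ m : ℕ, 1 / r = 2 * m + gaussMap r := by
  obtain ⟨m, hm⟩ := heven
  refine ⟨m, ?_⟩
  rw [one_div_eq_floor_add_gaussMap hr.le, hm]
  push_cast
  ring

lemma fiberMap_half {r : ℝ} (hr0 : 0 < r) (hr : r < 1 / 2) (heven : Even ⌊1 / r⌋₊) :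
    fiberMap r (1 / 2) = gaussMap r / 2 := by
  obtain ⟨m, hm⟩ := one_div_eq_two_mul_add_gaussMap hr0 heven
  have hg := gaussMap_lt_one r
  rw [fiberMap_of_mul_gaussMap_lt hr0 (by nlinarith), Int.fract_eq_iff]
  refine ⟨by linarith [gaussMap_nonneg r], by linarith, m, ?_⟩
  field_simp at hm ⊢
  linear_combination hm

lemma fiberMap_half_add_self {r : ℝ} (hr0 : 0 < r) (heven : Even ⌊1 / r⌋₊) :
    fiberMap r (1 / 2 + r) = gaussMap r / 2 := by
  obtain ⟨m, hm⟩ := one_div_eq_two_mul_add_gaussMap hr0 heven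
  have hg := gaussMap_lt_one r
  rw [fiberMap_of_mul_gaussMap_lt hr0 (by nlinarith), Int.fract_eq_iff]
  refine ⟨by linarith [gaussMap_nonneg r], by linarith, m - 1, ?_⟩
  push_cast
  field_simp at hm ⊢
  linear_combination hm

lemma fiberMap_self_div_two {r : ℝ} (hr0 : 0 < r) (heven : Even ⌊1 / r⌋₊)
    (hg : gaussMap r < 1 / 2) : fiberMap r (r / 2) = 1 / 2 + gaussMap r := by
  obtain ⟨m, hm⟩ := one_div_eq_two_mul_add_gaussMap hr0 heven
  rw [fiberMap_of_mul_gaussMap_lt hr0 (by nlinarith), Int.fract_eq_iff]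
  refine ⟨by linarith [gaussMap_nonneg r], by linarith, 2 * m - 1, ?_⟩
  push_cast
  field_simp at hm ⊢
  linear_combination 2 * hm

lemma skewProd_iterate_fst (p : ℝ × ℝ) (n : ℕ) : (skewProd^[n] p).1 = gaussMap^[n] p.1 :=
  Semiconj.iterate_right (f := Prod.fst) (fun _ => rfl) n p

section EvenPartialQuotients

variable {ρ : ℝ}

lemma iterate_gaussMap_lt_half (hρ : ρ ∈ Ioo (0 : ℝ) 1) (hirr : Irrational ρ)
    (heven : ∀ n, Even (pquot ρ n)) (n : ℕ) : gaussMap^[n] ρ < 1 / 2 :=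
  lt_half_of_even_floor_one_div (iterate_gaussMap_pos hρ.1 hirr n)
    (iterate_gaussMap_lt_one hρ.2 n) (hirr.iterate_gaussMap n) (heven n)

lemma skewProd_iterate_gaussMap_div_two (hρ : ρ ∈ Ioo (0 : ℝ) 1) (hirr : Irrational ρ)
    (heven : ∀ n, Even (pquot ρ n)) (n : ℕ) :
    skewProd (gaussMap^[n] ρ, gaussMap^[n] ρ / 2) =
      (gaussMap^[n + 1] ρ, 1 / 2 + gaussMap^[n + 1] ρ) := by
  have hg := iterate_gaussMap_lt_half hρ hirr heven (n + 1)
  rw [iterate_succ_apply'] at hg ⊢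
  exact Prod.ext rfl (fiberMap_self_div_two (iterate_gaussMap_pos hρ.1 hirr n) (heven n) hg)

lemma skewProd_half_add_iterate_gaussMap (hρ : 0 < ρ) (hirr : Irrational ρ)
    (heven : ∀ n, Even (pquot ρ n)) (n : ℕ) :
    skewProd (gaussMap^[n] ρ, 1 / 2 + gaussMap^[n] ρ) =
      (gaussMap^[n + 1] ρ, gaussMap^[n + 1] ρ / 2) := by
  rw [iterate_succ_apply']
  exact Prod.ext rfl (fiberMap_half_add_self (iterate_gaussMap_pos hρ hirr n) (heven n))

lemma skewProd_iterate_two_mul_add_one (hρ : ρ ∈ Ioo (0 : ℝ) 1) (hirr : Irrational ρ)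
    (heven : ∀ n, Even (pquot ρ n)) (k : ℕ) :
    skewProd^[2 * k + 1] (ρ, 1 / 2) = (gaussMap^[2 * k + 1] ρ, gaussMap^[2 * k + 1] ρ / 2) := by
  induction k with
  | zero =>
    exact Prod.ext rfl (fiberMap_half hρ.1 (iterate_gaussMap_lt_half hρ hirr heven 0) (heven 0))
  | succ k ih =>
    rw [show 2 * (k + 1) + 1 = 2 * k + 1 + 1 + 1 by ring, iterate_succ_apply',
      iterate_succ_apply', ih, skewProd_iterate_gaussMap_div_two hρ hirr heven,
      skewProd_half_add_iterate_gaussMap hρ.1 hirr heven]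

lemma skewProd_iterate_two_mul_add_two (hρ : ρ ∈ Ioo (0 : ℝ) 1) (hirr : Irrational ρ)
    (heven : ∀ n, Even (pquot ρ n)) (k : ℕ) :
    skewProd^[2 * k + 2] (ρ, 1 / 2) =
      (gaussMap^[2 * k + 2] ρ, 1 / 2 + gaussMap^[2 * k + 2] ρ) := by
  rw [iterate_succ_apply', skewProd_iterate_two_mul_add_one hρ hirr heven,
    skewProd_iterate_gaussMap_div_two hρ hirr heven]

end EvenPartialQuotients

/-- **Proposition 5.1 (even-type rotation numbers).** If `ρ ∈ (0,1)` is irrational with all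
partial quotients even, then the orbit `(ρ_n, α_n) = Tⁿ(ρ, 1/2)` satisfies `ρ_n = Gⁿ(ρ)`,
`ρ_n < 1/2` for `n ≥ 1`, `α_n = ρ_n/2` for odd `n` and `α_n = 1/2 + ρ_n` for even `n ≥ 1`.
In particular, if moreover `a_n → ∞`, then `α_{2i} → 1/2`. -/
theorem evenType (ρ : ℝ) (hρ : ρ ∈ Ioo (0 : ℝ) 1) (hirr : Irrational ρ)
    (heven : ∀ n : ℕ, Even (pquot ρ n)) :
    (∀ n : ℕ, (skewProd^[n] (ρ, 1 / 2)).1 = gaussMap^[n] ρ) ∧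
    (∀ n : ℕ, 1 ≤ n → (skewProd^[n] (ρ, 1 / 2)).1 < 1 / 2) ∧
    (∀ n : ℕ, 1 ≤ n → Odd n →
      (skewProd^[n] (ρ, 1 / 2)).2 = (skewProd^[n] (ρ, 1 / 2)).1 / 2) ∧
    (∀ n : ℕ, 1 ≤ n → Even n →
      (skewProd^[n] (ρ, 1 / 2)).2 = 1 / 2 + (skewProd^[n] (ρ, 1 / 2)).1) ∧
    (Tendsto (fun n : ℕ => pquot ρ n) atTop atTop →
      Tendsto (fun i : ℕ => (skewProd^[2 * i] (ρ, 1 / 2)).2) atTop (𝓝 (1 / 2))) := by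
  have horbit_odd : ∀ n, Odd n →
      skewProd^[n] (ρ, 1 / 2) = (gaussMap^[n] ρ, gaussMap^[n] ρ / 2) := by
    rintro n ⟨k, rfl⟩
    exact skewProd_iterate_two_mul_add_one hρ hirr heven k
  have horbit_even : ∀ n, 1 ≤ n → Even n →
      skewProd^[n] (ρ, 1 / 2) = (gaussMap^[n] ρ, 1 / 2 + gaussMap^[n] ρ) := by
    rintro n hn ⟨k, rfl⟩
    obtain ⟨j, rfl⟩ : ∃ j, k = j + 1 := ⟨k - 1, by omega⟩
    rw [show j + 1 + (j + 1) = 2 * j + 2 by ring]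
    exact skewProd_iterate_two_mul_add_two hρ hirr heven j
  refine ⟨skewProd_iterate_fst _, fun n _ => ?_, fun n _ hn => by rw [horbit_odd n hn],
    fun n hn hn' => by rw [horbit_even n hn hn'], fun htend => ?_⟩
  · rw [skewProd_iterate_fst]
    exact iterate_gaussMap_lt_half hρ hirr heven n
  · have hρ_even : Tendsto (fun i => gaussMap^[2 * i] ρ) atTop (𝓝 0) :=
      (tendsto_zero_of_tendsto_floor_one_div htend).comp
        (strictMono_mul_left_of_pos two_pos).tendsto_atTop
    have hlim : Tendsto (fun i => 1 / 2 + gaussMap^[2 * i] ρ) atTop (𝓝 (1 / 2)) := by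
      simpa using hρ_even.const_add (1 / 2 : ℝ)
    refine hlim.congr' ?_
    filter_upwards [eventually_ge_atTop 1] with i hi
    rw [horbit_even (2 * i) (by omega) (even_two_mul i)]
end
end

section
/- There exist constants C>0 and 0<λ<1 such that every Markov n-tile W of the skew product T satisfies diam(W) < C·λ^n. -/
/-!
On each atom, `T` is inverted by an explicit branch. In the base,
`|ρ - ρ'| = ρ ρ' |G ρ - G ρ'|` with `ρ G(ρ) ≤ 1/2`, so base distances shrink by `1/4` over two
steps. In the fiber, `|α - α'| ≤ m |T_ρ α - T_ρ' α'| + |G ρ - G ρ'|`, where the factor `m` is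
`ρ G(ρ) ≤ 1/2` on `U_k`, `1` on `R_k` and `ρ` on `V_{k,ℓ}`. A step through `R_k` lands at `α > 0`,
and two consecutive steps through trapezoids contribute at most `ρ G(ρ) ≤ 1/2`, so any three
consecutive factors multiply to at most `1/2`. Hence `|Δα| + 6 |Δρ|` contracts by `3/4` every three
steps, which gives `diam W ≤ 8 (3/4)^⌊n/3⌋ < 10 (11/12)^n`.
-/


noncomputable section

open Set Filter MeasureTheory Topology

/-- `R⁺ = (0,1) × (0,1)`. -/
def Rplus : Set (ℝ × ℝ) := Ioo (0 : ℝ) 1 ×ˢ Ioo (0 : ℝ) 1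

/-- `R⁻ = (0,1) × (-1,0)`. -/
def Rminus : Set (ℝ × ℝ) := Ioo (0 : ℝ) 1 ×ˢ Ioo (-1 : ℝ) 0

/-- The trapezoid atoms `V_{k,ℓ}` of the Markov partition. -/
def atomV (k l : ℕ) : Set (ℝ × ℝ) :=
  {p | 1 / ((k : ℝ) + 1) < p.1 ∧ p.1 < 1 / (k : ℝ) ∧
    1 - ((l : ℝ) + 1) * p.1 < p.2 ∧ p.2 < 1 - (l : ℝ) * p.1}

/-- The triangle atoms `U_k` of the Markov partition. -/
def atomU (k : ℕ) : Set (ℝ × ℝ) :=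
  {p | 1 / ((k : ℝ) + 1) < p.1 ∧ p.1 < 1 / (k : ℝ) ∧ 0 < p.2 ∧ p.2 < 1 - (k : ℝ) * p.1}

/-- The rectangle atoms `R_k` of the Markov partition. -/
def atomR (k : ℕ) : Set (ℝ × ℝ) :=
  {p | 1 / ((k : ℝ) + 1) < p.1 ∧ p.1 < 1 / (k : ℝ) ∧ -1 < p.2 ∧ p.2 < 0}

/-- The atoms of the Markov partition for `T`. -/
def markovAtoms : Set (Set (ℝ × ℝ)) :=
  {A | (∃ k : ℕ, 1 ≤ k ∧ A = atomU k) ∨ (∃ k : ℕ, 1 ≤ k ∧ A = atomR k) ∨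
    (∃ k l : ℕ, 1 ≤ k ∧ l < k ∧ A = atomV k l)}

/-- A Markov `n`-tile: an open subset `W ⊆ R` such that each image `T^j(W)` (`j < n`) lies in a
single Markov atom, and `T^n` maps `W` bijectively onto `R⁺` or onto `R⁻`. -/
def IsMarkovTile (n : ℕ) (W : Set (ℝ × ℝ)) : Prop :=
  IsOpen W ∧ W ⊆ Rect ∧ (∀ j < n, ∃ A ∈ markovAtoms, skewProd^[j] '' W ⊆ A) ∧
    (Set.BijOn skewProd^[n] W Rplus ∨ Set.BijOn skewProd^[n] W Rminus)


local notation "T" => skewProd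

lemma fract_eq_sub_natCast {r : ℝ} {k : ℕ} (h₁ : (k : ℝ) ≤ r) (h₂ : r < k + 1) :
    Int.fract r = r - k :=
  Int.fract_eq_iff.2 ⟨by linarith, by linarith, k, by push_cast; ring⟩

section Band

variable {k : ℕ} {r s : ℝ}

lemma band_bounds (hk : 1 ≤ k) (hr : r ∈ Ioo (1 / ((k : ℝ) + 1)) (1 / k)) :
    0 < r ∧ r < 1 ∧ (k : ℝ) * r < 1 ∧ 1 < ((k : ℝ) + 1) * r := by
  obtain ⟨h₁, h₂⟩ := hr
  have hk₁ : (1 : ℝ) ≤ k := by exact_mod_cast hk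
  have hr₀ : 0 < r := lt_trans (by positivity) h₁
  have hkr : (k : ℝ) * r < 1 := by rwa [lt_div_iff₀ (by positivity), mul_comm] at h₂
  refine ⟨hr₀, by nlinarith, hkr, ?_⟩
  rwa [div_lt_iff₀ (by positivity), mul_comm] at h₁

lemma gaussMap_of_mem_band (hk : 1 ≤ k) (hr : r ∈ Ioo (1 / ((k : ℝ) + 1)) (1 / k)) :
    gaussMap r = 1 / r - k := by
  obtain ⟨hr₀, -, hkr, hkr'⟩ := band_bounds hk hr
  rw [gaussMap, if_neg hr₀.ne', fract_eq_sub_natCast]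
  · rw [le_div_iff₀ hr₀]; linarith
  · rw [div_lt_iff₀ hr₀]; linarith

lemma mul_gaussMap_of_mem_band (hk : 1 ≤ k) (hr : r ∈ Ioo (1 / ((k : ℝ) + 1)) (1 / k)) :
    r * gaussMap r = 1 - k * r := by
  rw [gaussMap_of_mem_band hk hr]
  field_simp [(band_bounds hk hr).1.ne']

lemma mul_gaussMap_le_half (hk : 1 ≤ k) (hr : r ∈ Ioo (1 / ((k : ℝ) + 1)) (1 / k)) :
    r * gaussMap r ≤ 1 / 2 := by
  obtain ⟨-, -, -, hkr'⟩ := band_bounds hk hr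
  have hk₁ : (1 : ℝ) ≤ k := by exact_mod_cast hk
  rw [mul_gaussMap_of_mem_band hk hr]
  nlinarith

lemma abs_sub_eq_mul_abs_gaussMap_sub (hk : 1 ≤ k) (hr : r ∈ Ioo (1 / ((k : ℝ) + 1)) (1 / k))
    (hs : s ∈ Ioo (1 / ((k : ℝ) + 1)) (1 / k)) :
    |r - s| = r * s * |gaussMap r - gaussMap s| := by
  have hr₀ := (band_bounds hk hr).1
  have hs₀ := (band_bounds hk hs).1
  have : gaussMap r - gaussMap s = (s - r) / (r * s) := by
    rw [gaussMap_of_mem_band hk hr, gaussMap_of_mem_band hk hs]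
    field_simp
    ring
  rw [this, abs_div, abs_of_pos (mul_pos hr₀ hs₀), abs_sub_comm]
  field_simp

lemma natCast_mul_abs_sub_le (hk : 1 ≤ k) (hr : r ∈ Ioo (1 / ((k : ℝ) + 1)) (1 / k))
    (hs : s ∈ Ioo (1 / ((k : ℝ) + 1)) (1 / k)) :
    k * |r - s| ≤ |gaussMap r - gaussMap s| := by
  obtain ⟨hr₀, -, hkr, -⟩ := band_bounds hk hr
  obtain ⟨hs₀, hs₁, -, -⟩ := band_bounds hk hs
  have hkrs : (k : ℝ) * (r * s) ≤ 1 := by nlinarith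
  rw [abs_sub_eq_mul_abs_gaussMap_sub hk hr hs, ← mul_assoc, ← mul_assoc]
  exact mul_le_of_le_one_left (abs_nonneg _) (by linarith)

end Band

lemma le_pow_div_mul_of_le_mul {u : ℕ → ℝ} {n k : ℕ} {B c : ℝ} (hc : 0 ≤ c)
    (hB : ∀ j ≤ n, u j ≤ B) (hu : ∀ j, j + k ≤ n → u j ≤ c * u (j + k)) :
    u 0 ≤ c ^ (n / k) * B := by
  suffices h : ∀ q j, j + k * q ≤ n → u j ≤ c ^ q * B by
    simpa using h (n / k) 0 (by simpa using Nat.mul_div_le n k)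
  intro q
  induction q with
  | zero => intro j hj; simpa using hB j (by simpa using hj)
  | succ q ih =>
    intro j hj
    calc u j ≤ c * u (j + k) := hu j (by nlinarith)
      _ ≤ c * (c ^ q * B) := by gcongr; exact ih (j + k) (by rw [mul_add_one] at hj; omega)
      _ = c ^ (q + 1) * B := by ring

lemma pow_div_mul_pow_pred_le {c lam : ℝ} {k : ℕ} (n : ℕ) (hk : 0 < k) (hc : 0 ≤ c)
    (hcl : c ≤ lam ^ k) (hl₀ : 0 ≤ lam) (hl₁ : lam ≤ 1) :
    c ^ (n / k) * lam ^ (k - 1) ≤ lam ^ n := by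
  calc c ^ (n / k) * lam ^ (k - 1) ≤ lam ^ (k * (n / k)) * lam ^ (n % k) := by
        rw [pow_mul]
        exact mul_le_mul (pow_le_pow_left₀ hc hcl _)
          (pow_le_pow_of_le_one hl₀ hl₁ (Nat.le_pred_of_lt (Nat.mod_lt n hk)))
          (by positivity) (by positivity)
    _ = lam ^ n := by rw [← pow_add, Nat.div_add_mod]

lemma exists_band_of_mem_markovAtoms {A : Set (ℝ × ℝ)} (hA : A ∈ markovAtoms) :
    ∃ k : ℕ, 1 ≤ k ∧ ∀ x ∈ A, x.1 ∈ Ioo (1 / ((k : ℝ) + 1)) (1 / k) := by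
  rcases hA with ⟨k, hk, rfl⟩ | ⟨k, hk, rfl⟩ | ⟨k, l, hk, -, rfl⟩ <;>
    exact ⟨k, hk, fun x hx => ⟨hx.1, hx.2.1⟩⟩

/-- The factor `|dα / dα'|` by which the inverse of the branch of `T_ρ` through `α` contracts the
fiber, where `(ρ, α) = p`. -/
def fiberContraction (p : ℝ × ℝ) : ℝ :=
  if p.2 < 0 then 1 else if p.2 ≤ p.1 * gaussMap p.1 then p.1 * gaussMap p.1 else p.1

section Atoms

variable {k l : ℕ} {x : ℝ × ℝ}

lemma skewProd_snd_of_mem_atomR (hk : 1 ≤ k) (hx : x ∈ atomR k) : (T x).2 = -x.2 := by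
  have hx₀ := (band_bounds hk ⟨hx.1, hx.2.1⟩).1
  simp only [skewProd, fiberMap, if_neg hx₀.ne', if_pos hx.2.2.2.le]

lemma fiberContraction_of_mem_atomR (hx : x ∈ atomR k) : fiberContraction x = 1 :=
  if_pos hx.2.2.2

lemma skewProd_snd_of_mem_atomU (hk : 1 ≤ k) (hx : x ∈ atomU k) :
    (T x).2 = -x.2 / (1 - k * x.1) := by
  have hG := mul_gaussMap_of_mem_band hk ⟨hx.1, hx.2.1⟩
  have hx₀ := (band_bounds hk ⟨hx.1, hx.2.1⟩).1
  simp only [skewProd, fiberMap, if_neg hx₀.ne', if_neg (not_le.2 hx.2.2.1), hG,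
    if_pos hx.2.2.2.le]

lemma skewProd_snd_mem_of_mem_atomU (hk : 1 ≤ k) (hx : x ∈ atomU k) :
    (T x).2 ∈ Ioo (-1) 0 := by
  rw [skewProd_snd_of_mem_atomU hk hx, neg_div]
  obtain ⟨-, -, h₃, h₄⟩ := hx
  exact ⟨neg_lt_neg ((div_lt_one (by linarith)).2 h₄), neg_neg_of_pos (div_pos h₃ (by linarith))⟩

lemma fiberContraction_of_mem_atomU (hk : 1 ≤ k) (hx : x ∈ atomU k) :
    fiberContraction x = 1 - k * x.1 := by
  have hG := mul_gaussMap_of_mem_band hk ⟨hx.1, hx.2.1⟩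
  simp only [fiberContraction, if_neg (not_lt.2 hx.2.2.1.le), hG, if_pos hx.2.2.2.le]

lemma mul_gaussMap_lt_snd_of_mem_atomV (hk : 1 ≤ k) (hl : l < k) (hx : x ∈ atomV k l) :
    x.1 * gaussMap x.1 < x.2 := by
  rw [mul_gaussMap_of_mem_band hk ⟨hx.1, hx.2.1⟩]
  obtain ⟨h₁, h₂, h₃, -⟩ := hx
  have hx₀ := (band_bounds hk ⟨h₁, h₂⟩).1
  have hlk : (l : ℝ) + 1 ≤ k := by exact_mod_cast hl
  nlinarith

lemma snd_pos_of_mem_atomV (hk : 1 ≤ k) (hl : l < k) (hx : x ∈ atomV k l) : 0 < x.2 := by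
  have hα := mul_gaussMap_lt_snd_of_mem_atomV hk hl hx
  rw [mul_gaussMap_of_mem_band hk ⟨hx.1, hx.2.1⟩] at hα
  linarith [(band_bounds hk ⟨hx.1, hx.2.1⟩).2.2.1]

lemma skewProd_snd_of_mem_atomV (hk : 1 ≤ k) (hl : l < k) (hx : x ∈ atomV k l) :
    (T x).2 = (1 - x.2) / x.1 - l := by
  have hα := mul_gaussMap_lt_snd_of_mem_atomV hk hl hx
  have hα₀ := snd_pos_of_mem_atomV hk hl hx
  obtain ⟨h₁, h₂, h₃, h₄⟩ := hx
  have hx₀ := (band_bounds hk ⟨h₁, h₂⟩).1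
  simp only [skewProd, fiberMap, if_neg hx₀.ne', if_neg (not_le.2 hα₀), if_neg (not_le.2 hα)]
  apply fract_eq_sub_natCast
  · rw [le_div_iff₀ hx₀]; linarith
  · rw [div_lt_iff₀ hx₀]; linarith

lemma skewProd_snd_mem_of_mem_atomV (hk : 1 ≤ k) (hl : l < k) (hx : x ∈ atomV k l) :
    (T x).2 ∈ Ioo 0 1 := by
  rw [skewProd_snd_of_mem_atomV hk hl hx]
  obtain ⟨h₁, h₂, h₃, h₄⟩ := hx
  have hx₀ := (band_bounds hk ⟨h₁, h₂⟩).1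
  constructor
  · rw [sub_pos, lt_div_iff₀ hx₀]; linarith
  · rw [sub_lt_iff_lt_add, div_lt_iff₀ hx₀]; linarith

lemma fiberContraction_of_mem_atomV (hk : 1 ≤ k) (hl : l < k) (hx : x ∈ atomV k l) :
    fiberContraction x = x.1 := by
  have hα := mul_gaussMap_lt_snd_of_mem_atomV hk hl hx
  simp only [fiberContraction, if_neg (not_lt.2 (snd_pos_of_mem_atomV hk hl hx).le),
    if_neg (not_le.2 hα)]

end Atoms

lemma abs_neg_mul_add_mul_le {m v w t K g : ℝ} (hm : 0 ≤ m) (hw : |w| ≤ K) (ht : K * |t| ≤ g) :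
    |-m * v + w * t| ≤ m * |v| + g :=
  calc |-m * v + w * t| ≤ |-m * v| + |w * t| := abs_add_le _ _
    _ = m * |v| + |w| * |t| := by rw [abs_mul, abs_mul, abs_neg, abs_of_nonneg hm]
    _ ≤ m * |v| + g := by
      gcongr
      exact (mul_le_mul_of_nonneg_right hw (abs_nonneg t)).trans ht

section Step

variable {k l : ℕ} {A : Set (ℝ × ℝ)} {x y : ℝ × ℝ}

lemma abs_sub_snd_le_of_mem_atomU (hk : 1 ≤ k) (hx : x ∈ atomU k) (hy : y ∈ atomU k) :
    |x.2 - y.2| ≤ fiberContraction x * |(T x).2 - (T y).2| + |(T x).1 - (T y).1| := by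
  have hkx := (band_bounds hk ⟨hx.1, hx.2.1⟩).2.2.1
  have hky := (band_bounds hk ⟨hy.1, hy.2.1⟩).2.2.1
  have hb := skewProd_snd_mem_of_mem_atomU hk hy
  have hxa : x.2 = -(1 - k * x.1) * (T x).2 := by
    rw [skewProd_snd_of_mem_atomU hk hx]; field_simp [(sub_pos.2 hkx).ne']
  have hyb : y.2 = -(1 - k * y.1) * (T y).2 := by
    rw [skewProd_snd_of_mem_atomU hk hy]; field_simp [(sub_pos.2 hky).ne']
  have hsplit :
      x.2 - y.2 = -(1 - k * x.1) * ((T x).2 - (T y).2) + (k * (T y).2) * (x.1 - y.1) := by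
    rw [hxa, hyb]; ring
  rw [hsplit, fiberContraction_of_mem_atomU hk hx]
  refine abs_neg_mul_add_mul_le (by linarith) ?_ (natCast_mul_abs_sub_le hk ⟨hx.1, hx.2.1⟩
    ⟨hy.1, hy.2.1⟩)
  rw [abs_mul, Nat.abs_cast]
  exact mul_le_of_le_one_right (Nat.cast_nonneg k) (abs_le.2 ⟨hb.1.le, hb.2.le.trans zero_le_one⟩)

lemma abs_sub_snd_le_of_mem_atomV (hk : 1 ≤ k) (hl : l < k) (hx : x ∈ atomV k l)
    (hy : y ∈ atomV k l) :
    |x.2 - y.2| ≤ fiberContraction x * |(T x).2 - (T y).2| + |(T x).1 - (T y).1| := by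
  have hx₀ := (band_bounds hk ⟨hx.1, hx.2.1⟩).1
  have hy₀ := (band_bounds hk ⟨hy.1, hy.2.1⟩).1
  have hb := skewProd_snd_mem_of_mem_atomV hk hl hy
  have hlk : (l : ℝ) + 1 ≤ k := by exact_mod_cast hl
  have hxa : x.2 = 1 - x.1 * ((T x).2 + l) := by
    rw [skewProd_snd_of_mem_atomV hk hl hx]; field_simp; ring
  have hyb : y.2 = 1 - y.1 * ((T y).2 + l) := by
    rw [skewProd_snd_of_mem_atomV hk hl hy]; field_simp; ring
  have hsplit : x.2 - y.2 = -x.1 * ((T x).2 - (T y).2) + (-((T y).2 + l)) * (x.1 - y.1) := by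
    rw [hxa, hyb]; ring
  rw [hsplit, fiberContraction_of_mem_atomV hk hl hx]
  refine abs_neg_mul_add_mul_le hx₀.le ?_ (natCast_mul_abs_sub_le hk ⟨hx.1, hx.2.1⟩
    ⟨hy.1, hy.2.1⟩)
  rw [abs_neg, abs_of_pos (add_pos_of_pos_of_nonneg hb.1 (Nat.cast_nonneg l))]
  linarith [hb.2]

lemma abs_sub_snd_le_of_mem_markovAtoms (hA : A ∈ markovAtoms) (hx : x ∈ A) (hy : y ∈ A) :
    |x.2 - y.2| ≤ fiberContraction x * |(T x).2 - (T y).2| + |(T x).1 - (T y).1| := by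
  rcases hA with ⟨k, hk, rfl⟩ | ⟨k, hk, rfl⟩ | ⟨k, l, hk, hl, rfl⟩
  · exact abs_sub_snd_le_of_mem_atomU hk hx hy
  · rw [fiberContraction_of_mem_atomR hx, skewProd_snd_of_mem_atomR hk hx,
      skewProd_snd_of_mem_atomR hk hy, one_mul, neg_sub_neg, abs_sub_comm]
    exact le_add_of_nonneg_right (abs_nonneg _)
  · exact abs_sub_snd_le_of_mem_atomV hk hl hx hy

end Step

section MarkovAtoms

variable {A : Set (ℝ × ℝ)} {x y : ℝ × ℝ}

lemma mem_box_of_mem_markovAtoms (hA : A ∈ markovAtoms) (hx : x ∈ A) :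
    x ∈ Ioo (0 : ℝ) 1 ×ˢ Ioo (-1 : ℝ) 1 := by
  obtain ⟨k, hk, hband⟩ := exists_band_of_mem_markovAtoms hA
  obtain ⟨hx₀, hx₁, hkx, -⟩ := band_bounds hk (hband x hx)
  refine ⟨⟨hx₀, hx₁⟩, ?_⟩
  rcases hA with ⟨k, hk, rfl⟩ | ⟨k, hk, rfl⟩ | ⟨k, l, hk, hl, rfl⟩
  · exact ⟨by linarith [hx.2.2.1], by nlinarith [hx.2.2.2]⟩
  · exact ⟨hx.2.2.1, by linarith [hx.2.2.2]⟩
  · have hl₀ : (0 : ℝ) ≤ l := Nat.cast_nonneg l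
    exact ⟨by linarith [snd_pos_of_mem_atomV hk hl hx], by nlinarith [hx.2.2.2]⟩

lemma fiberContraction_mem_Icc (hA : A ∈ markovAtoms) (hx : x ∈ A) :
    fiberContraction x ∈ Icc 0 1 := by
  rcases hA with ⟨k, hk, rfl⟩ | ⟨k, hk, rfl⟩ | ⟨k, l, hk, hl, rfl⟩
  · obtain ⟨hx₀, -, hkx, -⟩ := band_bounds hk ⟨hx.1, hx.2.1⟩
    rw [fiberContraction_of_mem_atomU hk hx]
    exact ⟨by linarith, by nlinarith⟩
  · rw [fiberContraction_of_mem_atomR hx]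
    exact ⟨zero_le_one, le_rfl⟩
  · obtain ⟨hx₀, hx₁, -, -⟩ := band_bounds hk ⟨hx.1, hx.2.1⟩
    rw [fiberContraction_of_mem_atomV hk hl hx]
    exact ⟨hx₀.le, hx₁.le⟩

/-- The disjuncts are the cases `U_k`, `R_k` and `V_{k,ℓ}`. -/
lemma fiberContraction_trichotomy (hA : A ∈ markovAtoms) (hx : x ∈ A) :
    fiberContraction x ≤ 1 / 2 ∨ (x.2 < 0 ∧ 0 < (T x).2) ∨
      (fiberContraction x = x.1 ∧ 0 < x.2 ∧ 0 < (T x).2) := by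
  rcases hA with ⟨k, hk, rfl⟩ | ⟨k, hk, rfl⟩ | ⟨k, l, hk, hl, rfl⟩
  · left
    rw [fiberContraction_of_mem_atomU hk hx, ← mul_gaussMap_of_mem_band hk ⟨hx.1, hx.2.1⟩]
    exact mul_gaussMap_le_half hk ⟨hx.1, hx.2.1⟩
  · right; left
    rw [skewProd_snd_of_mem_atomR hk hx]
    exact ⟨hx.2.2.2, neg_pos.2 hx.2.2.2⟩
  · right; right
    exact ⟨fiberContraction_of_mem_atomV hk hl hx, snd_pos_of_mem_atomV hk hl hx,
      (skewProd_snd_mem_of_mem_atomV hk hl hx).1⟩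

lemma abs_sub_fst_eq_of_mem_markovAtoms (hA : A ∈ markovAtoms) (hx : x ∈ A) (hy : y ∈ A) :
    |x.1 - y.1| = x.1 * y.1 * |(T x).1 - (T y).1| := by
  obtain ⟨k, hk, hband⟩ := exists_band_of_mem_markovAtoms hA
  exact abs_sub_eq_mul_abs_gaussMap_sub hk (hband x hx) (hband y hy)

lemma abs_sub_fst_le_of_mem_markovAtoms (hA : A ∈ markovAtoms) (hx : x ∈ A) (hy : y ∈ A) :
    |x.1 - y.1| ≤ |(T x).1 - (T y).1| := by
  obtain ⟨⟨hx₀, hx₁⟩, -⟩ := mem_box_of_mem_markovAtoms hA hx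
  obtain ⟨⟨hy₀, hy₁⟩, -⟩ := mem_box_of_mem_markovAtoms hA hy
  rw [abs_sub_fst_eq_of_mem_markovAtoms hA hx hy]
  exact mul_le_of_le_one_left (abs_nonneg _) (mul_le_one₀ hx₁.le hy₀.le hy₁.le)

lemma fst_mul_skewProd_fst_le_half (hA : A ∈ markovAtoms) (hx : x ∈ A) :
    x.1 * (T x).1 ≤ 1 / 2 := by
  obtain ⟨k, hk, hband⟩ := exists_band_of_mem_markovAtoms hA
  exact mul_gaussMap_le_half hk (hband x hx)

end MarkovAtoms

def SameAtom (x y : ℝ × ℝ) : Prop := ∃ A ∈ markovAtoms, x ∈ A ∧ y ∈ A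

/-- The weight `6` makes this contract by `3/4` along three steps of a pair of orbits that share
atoms: the fiber part halves up to three base errors, while the base part shrinks by `1/4`. -/
def weightedDist (x y : ℝ × ℝ) : ℝ := |x.2 - y.2| + 6 * |x.1 - y.1|

section Contraction

variable {x y : ℝ × ℝ}

lemma fiberContraction_mul_le_half (hx : x ∈ ⋃₀ markovAtoms) (hTx : T x ∈ ⋃₀ markovAtoms)
    (hα : 0 < x.2) :
    fiberContraction x * fiberContraction (T x) ≤ 1 / 2 := by
  obtain ⟨A, hA, hx⟩ := hx
  obtain ⟨B, hB, hTx⟩ := hTx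
  have hm := fiberContraction_mem_Icc hA hx
  have hm' := fiberContraction_mem_Icc hB hTx
  rcases fiberContraction_trichotomy hA hx with h | ⟨hneg, -⟩ | ⟨hV, -, hpos⟩
  · nlinarith [hm'.1, hm'.2]
  · linarith
  rcases fiberContraction_trichotomy hB hTx with h' | ⟨hneg', -⟩ | ⟨hV', -, -⟩
  · nlinarith [hm.1, hm.2]
  · linarith
  rw [hV, hV']
  exact fst_mul_skewProd_fst_le_half hA hx

lemma fiberContraction_mul_mul_le_half (hx : x ∈ ⋃₀ markovAtoms)
    (hTx : T x ∈ ⋃₀ markovAtoms) (hTTx : T (T x) ∈ ⋃₀ markovAtoms) :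
    fiberContraction x * fiberContraction (T x) * fiberContraction (T (T x)) ≤ 1 / 2 := by
  obtain ⟨A, hA, hxA⟩ := hx
  obtain ⟨B, hB, hTxB⟩ := hTx
  obtain ⟨C, hC, hTTxC⟩ := hTTx
  have hm := fiberContraction_mem_Icc hA hxA
  have hm' := fiberContraction_mem_Icc hB hTxB
  have hm'' := fiberContraction_mem_Icc hC hTTxC
  rcases fiberContraction_trichotomy hA hxA with h | ⟨-, hTpos⟩ | ⟨-, hpos, -⟩
  · nlinarith [mul_le_one₀ hm'.2 hm''.1 hm''.2, mul_nonneg hm'.1 hm''.1]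
  · have := fiberContraction_mul_le_half ⟨B, hB, hTxB⟩ ⟨C, hC, hTTxC⟩ hTpos
    rw [mul_assoc]
    exact (mul_le_mul hm.2 this (mul_nonneg hm'.1 hm''.1) zero_le_one).trans_eq (one_mul _)
  · have := fiberContraction_mul_le_half ⟨A, hA, hxA⟩ ⟨B, hB, hTxB⟩ hpos
    exact (mul_le_mul this hm''.2 hm''.1 (by norm_num)).trans_eq (mul_one _)

lemma abs_sub_fst_le_quarter_of_two_steps (h₀ : SameAtom x y) (h₁ : SameAtom (T x) (T y)) :
    |x.1 - y.1| ≤ 1 / 4 * |(T (T x)).1 - (T (T y)).1| := by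
  obtain ⟨A, hA, hx, hy⟩ := h₀
  obtain ⟨B, hB, hTx, hTy⟩ := h₁
  have hx₀ := (mem_box_of_mem_markovAtoms hA hx).1.1
  have hy₀ := (mem_box_of_mem_markovAtoms hA hy).1.1
  have hTx₀ := (mem_box_of_mem_markovAtoms hB hTx).1.1
  have hTy₀ := (mem_box_of_mem_markovAtoms hB hTy).1.1
  rw [abs_sub_fst_eq_of_mem_markovAtoms hA hx hy, abs_sub_fst_eq_of_mem_markovAtoms hB hTx hTy]
  calc x.1 * y.1 * ((T x).1 * (T y).1 * |(T (T x)).1 - (T (T y)).1|)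
      = x.1 * (T x).1 * (y.1 * (T y).1) * |(T (T x)).1 - (T (T y)).1| := by ring
    _ ≤ 1 / 2 * (1 / 2) * |(T (T x)).1 - (T (T y)).1| := by
      gcongr
      · exact fst_mul_skewProd_fst_le_half hA hx
      · exact fst_mul_skewProd_fst_le_half hA hy
    _ = _ := by ring

lemma abs_sub_snd_le_of_three_steps (h₀ : SameAtom x y) (h₁ : SameAtom (T x) (T y))
    (h₂ : SameAtom (T (T x)) (T (T y))) :
    |x.2 - y.2| ≤ 1 / 2 * |(T (T (T x))).2 - (T (T (T y))).2| +
      3 * |(T (T (T x))).1 - (T (T (T y))).1| := by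
  obtain ⟨A, hA, hx, hy⟩ := h₀
  obtain ⟨B, hB, hTx, hTy⟩ := h₁
  obtain ⟨C, hC, hTTx, hTTy⟩ := h₂
  set x₁ := T x
  set x₂ := T x₁
  set x₃ := T x₂
  set y₁ := T y
  set y₂ := T y₁
  set y₃ := T y₂
  have hd₁ : |x₁.1 - y₁.1| ≤ |x₂.1 - y₂.1| := abs_sub_fst_le_of_mem_markovAtoms hB hTx hTy
  have hd₂ : |x₂.1 - y₂.1| ≤ |x₃.1 - y₃.1| := abs_sub_fst_le_of_mem_markovAtoms hC hTTx hTTy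
  have hm₀ := fiberContraction_mem_Icc hA hx
  have hm₁ := fiberContraction_mem_Icc hB hTx
  have hm : fiberContraction x * fiberContraction x₁ * fiberContraction x₂ ≤ 1 / 2 :=
    fiberContraction_mul_mul_le_half ⟨A, hA, hx⟩ ⟨B, hB, hTx⟩ ⟨C, hC, hTTx⟩
  calc |x.2 - y.2|
      ≤ fiberContraction x * |x₁.2 - y₁.2| + |x₁.1 - y₁.1| :=
        abs_sub_snd_le_of_mem_markovAtoms hA hx hy
    _ ≤ fiberContraction x * (fiberContraction x₁ * |x₂.2 - y₂.2| + |x₂.1 - y₂.1|) +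
          |x₁.1 - y₁.1| := by
        gcongr
        · exact hm₀.1
        · exact abs_sub_snd_le_of_mem_markovAtoms hB hTx hTy
    _ ≤ fiberContraction x * (fiberContraction x₁ * (fiberContraction x₂ * |x₃.2 - y₃.2| +
          |x₃.1 - y₃.1|) + |x₂.1 - y₂.1|) + |x₁.1 - y₁.1| := by
        gcongr
        · exact hm₀.1
        · exact hm₁.1
        · exact abs_sub_snd_le_of_mem_markovAtoms hC hTTx hTTy
    _ = fiberContraction x * fiberContraction x₁ * fiberContraction x₂ * |x₃.2 - y₃.2| +
          fiberContraction x * fiberContraction x₁ * |x₃.1 - y₃.1| +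
          fiberContraction x * |x₂.1 - y₂.1| + |x₁.1 - y₁.1| := by ring
    _ ≤ 1 / 2 * |x₃.2 - y₃.2| + 3 * |x₃.1 - y₃.1| := by
        have := mul_le_mul_of_nonneg_right hm (abs_nonneg (x₃.2 - y₃.2))
        have := mul_le_mul_of_nonneg_right (mul_le_one₀ hm₀.2 hm₁.1 hm₁.2)
          (abs_nonneg (x₃.1 - y₃.1))
        have := mul_le_mul_of_nonneg_right hm₀.2 (abs_nonneg (x₂.1 - y₂.1))
        linarith

lemma weightedDist_le_three_quarters (h₀ : SameAtom x y) (h₁ : SameAtom (T x) (T y))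
    (h₂ : SameAtom (T (T x)) (T (T y))) :
    weightedDist x y ≤ 3 / 4 * weightedDist (T (T (T x))) (T (T (T y))) := by
  have he := abs_sub_snd_le_of_three_steps h₀ h₁ h₂
  have hd₀ := abs_sub_fst_le_quarter_of_two_steps h₀ h₁
  obtain ⟨C, hC, hTTx, hTTy⟩ := h₂
  have hd₂ := abs_sub_fst_le_of_mem_markovAtoms hC hTTx hTTy
  unfold weightedDist
  linarith [abs_nonneg ((T (T (T x))).2 - (T (T (T y))).2)]

end Contraction

lemma dist_le_weightedDist (x y : ℝ × ℝ) : dist x y ≤ weightedDist x y := by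
  rw [Prod.dist_eq, Real.dist_eq, Real.dist_eq, weightedDist]
  exact max_le (by linarith [abs_nonneg (x.2 - y.2), abs_nonneg (x.1 - y.1)])
    (by linarith [abs_nonneg (x.1 - y.1)])

lemma weightedDist_le_eight {x y : ℝ × ℝ} (hx : x ∈ Ioo (0 : ℝ) 1 ×ˢ Ioo (-1 : ℝ) 1)
    (hy : y ∈ Ioo (0 : ℝ) 1 ×ˢ Ioo (-1 : ℝ) 1) : weightedDist x y ≤ 8 := by
  obtain ⟨⟨hx₁, hx₁'⟩, hx₂, hx₂'⟩ := hx
  obtain ⟨⟨hy₁, hy₁'⟩, hy₂, hy₂'⟩ := hy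
  have h₁ : |x.1 - y.1| ≤ 1 := abs_le.2 ⟨by linarith, by linarith⟩
  have h₂ : |x.2 - y.2| ≤ 2 := abs_le.2 ⟨by linarith, by linarith⟩
  rw [weightedDist]
  linarith

section Tile

variable {n : ℕ} {W : Set (ℝ × ℝ)} {p q : ℝ × ℝ}

lemma sameAtom_iterate_of_isMarkovTile (hW : IsMarkovTile n W) (hp : p ∈ W) (hq : q ∈ W)
    {j : ℕ} (hj : j < n) : SameAtom (T^[j] p) (T^[j] q) := by
  obtain ⟨A, hA, hWA⟩ := hW.2.2.1 j hj
  exact ⟨A, hA, hWA (mem_image_of_mem _ hp), hWA (mem_image_of_mem _ hq)⟩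

lemma iterate_mem_box_of_isMarkovTile (hW : IsMarkovTile n W) (hp : p ∈ W) {j : ℕ}
    (hj : j ≤ n) : T^[j] p ∈ Ioo (0 : ℝ) 1 ×ˢ Ioo (-1 : ℝ) 1 := by
  rcases hj.lt_or_eq with hj | rfl
  · obtain ⟨A, hA, hpA, -⟩ := sameAtom_iterate_of_isMarkovTile hW hp hp hj
    exact mem_box_of_mem_markovAtoms hA hpA
  rcases hW.2.2.2 with hbij | hbij
  · obtain ⟨hρ, hα₀, hα₁⟩ := hbij.mapsTo hp
    exact ⟨hρ, by linarith, hα₁⟩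
  · obtain ⟨hρ, hα₀, hα₁⟩ := hbij.mapsTo hp
    exact ⟨hρ, hα₀, by linarith⟩

lemma weightedDist_le_of_isMarkovTile (hW : IsMarkovTile n W) (hp : p ∈ W) (hq : q ∈ W) :
    weightedDist p q ≤ (3 / 4) ^ (n / 3) * 8 := by
  refine le_pow_div_mul_of_le_mul (u := fun j => weightedDist (T^[j] p) (T^[j] q))
    (by norm_num) (fun j hj => weightedDist_le_eight (iterate_mem_box_of_isMarkovTile hW hp hj)
      (iterate_mem_box_of_isMarkovTile hW hq hj)) fun j hj => ?_
  have h : ∀ i < 3, SameAtom (T^[i] (T^[j] p)) (T^[i] (T^[j] q)) :=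
    fun i hi => by
      simpa only [← Function.iterate_add_apply, add_comm i j] using
        sameAtom_iterate_of_isMarkovTile hW hp hq (by omega : j + i < n)
  rw [add_comm j 3, Function.iterate_add_apply, Function.iterate_add_apply]
  exact weightedDist_le_three_quarters (h 0 (by norm_num)) (h 1 (by norm_num)) (h 2 (by norm_num))

end Tile

/-- **Lemma A.4.** There exist `C > 0` and `0 < λ < 1` such that every Markov `n`-tile `W`
satisfies `diam W < C λⁿ`. -/
theorem markovTilesDiam :
    ∃ C : ℝ, 0 < C ∧ ∃ lam : ℝ, 0 < lam ∧ lam < 1 ∧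
      ∀ (n : ℕ) (W : Set (ℝ × ℝ)), IsMarkovTile n W →
        Metric.diam W < C * lam ^ n := by
  refine ⟨10, by norm_num, 11 / 12, by norm_num, by norm_num, fun n W hW => ?_⟩
  have hgeom := pow_div_mul_pow_pred_le n (by norm_num : 0 < 3) (by norm_num : (0 : ℝ) ≤ 3 / 4)
    (by norm_num : (3 / 4 : ℝ) ≤ (11 / 12) ^ 3) (by norm_num) (by norm_num)
  have hpos : (0 : ℝ) < (11 / 12) ^ n := by positivity
  calc Metric.diam W ≤ (3 / 4) ^ (n / 3) * 8 :=
        Metric.diam_le_of_forall_dist_le (by positivity) fun p hp q hq =>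
          (dist_le_weightedDist p q).trans (weightedDist_le_of_isMarkovTile hW hp hq)
    _ < 10 * (11 / 12) ^ n := by norm_num at hgeom; linarith
end
end
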